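/- arXiv:2505.24159 — 2 statements merged into one kernel-verified Lean document; each statement's English description precedes it below -/
import Mathlib

section
/- Revenue neutrality for the single-bus model: if (g*, r*) with Lagrange multipliers (π0*, {πk*}) satisfy strong duality for the contingency-constrained dispatch LP, then (π0* + Σ_k πk*)·d = Σ_i [(π0* + Σ_k πk*)·g*_{i0} + (Σ_k πk*)·r*_i − Σ_{k ∈ K_i^OFF} πk*·(g*_{i0} + r*_i)], i.e., the total consumer payment equals the total generation revenue net of security charges. -/
/-!
Since `a i k ∈ {0, 1}`, the security charge `∑_{k ∈ K_i^OFF} π k (g i + r i)` equals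
`(∑ k, π k - ∑ k, π k a i k) (g i + r i)`, so the net revenue of generator `i` is
`(π0 + ∑ k, π k a i k) g i + (∑ k, π k a i k) r i`. Adding and subtracting its costs, the total
net revenue is the primal cost plus the sum of the Lagrangian maxima, which by strong duality
is the consumer payment `(π0 + ∑ k, π k) d`.
-/

open Finset

theorem sum_filter_eq_zero_eq_sum_sub_sum_mul {K R : Type*} [Ring R] (s : Finset K)
    (π a : K → R) [DecidablePred (a · = 0)] (ha : ∀ k ∈ s, a k = 0 ∨ a k = 1) :
    ∑ k ∈ s with a k = 0, π k = ∑ k ∈ s, π k - ∑ k ∈ s, π k * a k := by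
  rw [sum_filter, ← sum_sub_distrib]
  refine sum_congr rfl fun k hk => ?_
  split_ifs with h0
  · simp [h0]
  · simp [(ha k hk).resolve_left h0]

theorem stmt4_general {I K : Type*} [Fintype I] [Fintype K]
    (c q g r : I → ℝ) (d π0 : ℝ) (π : K → ℝ) (a : I → K → ℝ)
    (ha : ∀ i k, a i k = 0 ∨ a i k = 1)
    (hSD : ∑ i, c i * g i + ∑ i, q i * r i =
      (π0 + ∑ k, π k) * d -
        ∑ i, ((π0 + ∑ k, π k * a i k - c i) * g i + ((∑ k, π k * a i k) - q i) * r i)) :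
    (π0 + ∑ k, π k) * d =
      ∑ i, ((π0 + ∑ k, π k) * g i + (∑ k, π k) * r i
        - ∑ k ∈ univ.filter (fun k => a i k = 0), π k * (g i + r i)) := by
  have net_revenue : ∀ i, (π0 + ∑ k, π k) * g i + (∑ k, π k) * r i
      - ∑ k ∈ univ.filter (fun k => a i k = 0), π k * (g i + r i)
      = (π0 + ∑ k, π k * a i k) * g i + (∑ k, π k * a i k) * r i := fun i => by
    rw [← sum_mul, sum_filter_eq_zero_eq_sum_sub_sum_mul _ _ _ fun k _ => ha i k]
    ring
  have revenue_split : ∑ i, ((π0 + ∑ k, π k * a i k) * g i + (∑ k, π k * a i k) * r i)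
      = ∑ i, c i * g i + ∑ i, q i * r i +
        ∑ i, ((π0 + ∑ k, π k * a i k - c i) * g i + ((∑ k, π k * a i k) - q i) * r i) := by
    simp only [← sum_add_distrib]
    exact sum_congr rfl fun i _ => by ring
  rw [sum_congr rfl fun i _ => net_revenue i, revenue_split]
  linarith

/-- Revenue neutrality for the single-bus model: under strong duality, the total
consumer payment equals total generation revenue net of security charges. -/
theorem stmt4 {I K : Type*} [Fintype I] [Fintype K] [DecidableEq K]
    (c q g r : I → ℝ) (d π0 : ℝ) (π : K → ℝ) (a : I → K → ℝ)
    (ha : ∀ i k, a i k = 0 ∨ a i k = 1)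
    (hSD : ∑ i, c i * g i + ∑ i, q i * r i =
      (π0 + ∑ k, π k) * d -
        ∑ i, ((π0 + ∑ k, π k * a i k - c i) * g i + ((∑ k, π k * a i k) - q i) * r i)) :
    (π0 + ∑ k, π k) * d =
      ∑ i, ((π0 + ∑ k, π k) * g i + (∑ k, π k) * r i
        - ∑ k ∈ univ.filter (fun k => a i k = 0), π k * (g i + r i)) :=
  stmt4_general c q g r d π0 π a ha hSD
end

section
/- Under the proposed pricing scheme of the single-bus model, the aggregate security charge collected from all generators equals the aggregate up-spinning reserve revenue paid to generators: Σ_i Σ_{k ∈ K_i^OFF} πk*(g*_{i0} + r*_i) = (Σ_k πk*)·Σ_i r*_i, provided that for each contingency k with πk* > 0 the post-contingency balance is binding with full reserve deployment, i.e., Σ_{i : a_{ik}=1}(g*_{i0} + r*_i) = d and each available generator's post-contingency output is at its upper bound. -/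
open Finset

/-
Removing generator `j` from the system leaves `∑ i ≠ j, (gᵢ + rᵢ) = d = ∑ i, gᵢ`, so the
outaged generator's output plus reserve equals the total reserve of the system. Charging each
contingency's price on this identity and summing over contingencies gives the claim.
-/

theorem Finset.sum_fiberwise_apply {ι κ M : Type*} [Fintype κ] [DecidableEq κ] [AddCommMonoid M]
    (s : Finset ι) (g : ι → κ) (f : ι → κ → M) :
    ∑ j, ∑ i ∈ s with g i = j, f i j = ∑ i ∈ s, f i (g i) := by
  rw [← sum_fiberwise s g (fun i => f i (g i))]
  refine sum_congr rfl fun j _ => sum_congr rfl fun i hi => ?_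
  rw [(mem_filter.mp hi).2]

theorem add_eq_sum_of_sum_erase_add_eq {I M : Type*} [Fintype I] [DecidableEq I]
    [AddCommGroup M] {g r : I → M} {d : M} (j : I)
    (hbal : ∑ i, g i = d) (hpost : ∑ i ∈ univ.erase j, (g i + r i) = d) :
    g j + r j = ∑ i, r i := by
  have hsplit := add_sum_erase univ (fun i => g i + r i) (mem_univ j)
  rw [hpost, sum_add_distrib, hbal] at hsplit
  exact add_right_cancel (hsplit.trans (add_comm _ _))

/-- Aggregate security charge equals aggregate up-spinning reserve revenue, when every
contingency `k` with positive price removes exactly one generator `out k` and the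
post-contingency balance binds with full reserve deployment. -/
theorem stmt12 {I K : Type*} [Fintype I] [Fintype K] [DecidableEq I]
    (g r : I → ℝ) (π : K → ℝ) (d : ℝ) (out : K → I)
    (hπ : ∀ k, 0 ≤ π k) (hbal : ∑ i, g i = d)
    (hk : ∀ k, 0 < π k → ∑ i ∈ univ.erase (out k), (g i + r i) = d) :
    ∑ i, ∑ k ∈ univ.filter (fun k => out k = i), π k * (g i + r i) =
      (∑ k, π k) * ∑ i, r i := by
  have hcharge : ∀ k, π k * (g (out k) + r (out k)) = π k * ∑ i, r i := by
    intro k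
    rcases (hπ k).eq_or_lt with hzero | hpos
    · simp [← hzero]
    · rw [add_eq_sum_of_sum_erase_add_eq (out k) hbal (hk k hpos)]
  calc ∑ i, ∑ k ∈ univ.filter (fun k => out k = i), π k * (g i + r i)
      = ∑ k, π k * (g (out k) + r (out k)) := sum_fiberwise_apply univ out _
    _ = ∑ k, π k * ∑ i, r i := sum_congr rfl fun k _ => hcharge k
    _ = (∑ k, π k) * ∑ i, r i := (sum_mul _ _ _).symm
end
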